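/- Let ω > 0, M ≥ 0 and ξ > 0. There exists N₀ = N₀(ω, M, ξ) > 0 such that for every x, e ∈ ℝ³ with ‖e‖ ≤ M and d_r(x) > N₀, setting v = F_ω(x) + e, one has D_{x,v}^ω( √(ξ/(ω² d_r(x))) ) ≤ ξ and D_{x,v}^ω( 2·max{2, ξ}/(ω √(d_r(x))) ) ≥ ξ. In particular, any time t ≥ 0 at which the traveled distance D_{x,v}^ω first reaches ξ satisfies √(ξ/(ω² d_r(x))) ≤ t ≤ 2·max{2, ξ}/(ω √(d_r(x))). -/

import Mathlib

/-!
Since `F_ω` is linear, `v - F_ω (x + s v) = e - s w` with `w = F_ω v`, and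
`|‖w‖ - ω² d_r(x)| ≤ ω ‖e‖`. Hence `D(t) = ∫₀ᵗ ‖e - s w‖ ds` lies within `‖e‖ t + ω ‖e‖ t² / 2`
of `ω² d_r(x) t² / 2`, which equals `ξ / 2` at the first time and `2 max{2, ξ}²` at the second,
while the error terms vanish as `d_r(x) → ∞`. Moreover `D` is strictly increasing once `w ≠ 0`,
because the integrand vanishes at most at one point; this brackets every time with `D(t) = ξ`.
-/

noncomputable def vec3 (a b c : ℝ) : EuclideanSpace ℝ (Fin 3) := WithLp.toLp 2 ![a, b, c]

noncomputable def Frot (ω : ℝ) (y : EuclideanSpace ℝ (Fin 3)) : EuclideanSpace ℝ (Fin 3) :=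
  vec3 (-ω * y 1) (ω * y 0) 0

noncomputable def dr (x : EuclideanSpace ℝ (Fin 3)) : ℝ :=
  Real.sqrt (x 0 ^ 2 + x 1 ^ 2)

noncomputable def Dtrav (ω : ℝ) (x v : EuclideanSpace ℝ (Fin 3)) (t : ℝ) : ℝ :=
  ∫ s in (0 : ℝ)..t, ‖v - Frot ω (x + s • v)‖

open Filter Topology

section IntegralNormSubSmul

variable {E : Type*} [NormedAddCommGroup E] [NormedSpace ℝ E]

theorem integral_norm_sub_smul_le (e w : E) {t : ℝ} (ht : 0 ≤ t) :
    ∫ s in (0 : ℝ)..t, ‖e - s • w‖ ≤ ‖w‖ * t ^ 2 / 2 + ‖e‖ * t := by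
  have hint : ∫ s in (0 : ℝ)..t, (‖w‖ * s + ‖e‖) = ‖w‖ * t ^ 2 / 2 + ‖e‖ * t := by
    rw [intervalIntegral.integral_add (intervalIntegral.intervalIntegrable_id.const_mul _)
      intervalIntegrable_const, intervalIntegral.integral_const_mul, integral_id,
      intervalIntegral.integral_const]
    simp only [smul_eq_mul]
    ring
  rw [← hint]
  refine intervalIntegral.integral_mono_on ht (Continuous.intervalIntegrable (by fun_prop) _ _)
    (Continuous.intervalIntegrable (by fun_prop) _ _) fun s hs => ?_
  calc ‖e - s • w‖ ≤ ‖e‖ + ‖s • w‖ := norm_sub_le _ _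
    _ = ‖w‖ * s + ‖e‖ := by rw [norm_smul, Real.norm_of_nonneg hs.1]; ring

theorem le_integral_norm_sub_smul (e w : E) {t : ℝ} (ht : 0 ≤ t) :
    ‖w‖ * t ^ 2 / 2 - ‖e‖ * t ≤ ∫ s in (0 : ℝ)..t, ‖e - s • w‖ := by
  have hint : ∫ s in (0 : ℝ)..t, (‖w‖ * s - ‖e‖) = ‖w‖ * t ^ 2 / 2 - ‖e‖ * t := by
    rw [intervalIntegral.integral_sub (intervalIntegral.intervalIntegrable_id.const_mul _)
      intervalIntegrable_const, intervalIntegral.integral_const_mul, integral_id,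
      intervalIntegral.integral_const]
    simp only [smul_eq_mul]
    ring
  rw [← hint]
  refine intervalIntegral.integral_mono_on ht (Continuous.intervalIntegrable (by fun_prop) _ _)
    (Continuous.intervalIntegrable (by fun_prop) _ _) fun s hs => ?_
  calc ‖w‖ * s - ‖e‖ = ‖s • w‖ - ‖e‖ := by rw [norm_smul, Real.norm_of_nonneg hs.1]; ring
    _ ≤ ‖s • w - e‖ := norm_sub_norm_le _ _
    _ = ‖e - s • w‖ := norm_sub_rev _ _

theorem strictMono_integral_norm_sub_smul (e : E) {w : E} (hw : w ≠ 0) :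
    StrictMono fun t => ∫ s in (0 : ℝ)..t, ‖e - s • w‖ := by
  intro a b hab
  have hcont : Continuous fun s : ℝ => ‖e - s • w‖ := by fun_prop
  rw [← sub_pos, intervalIntegral.integral_interval_sub_left (hcont.intervalIntegrable _ _)
    (hcont.intervalIntegrable _ _)]
  -- `e = c • w` holds for at most one `c`, so the integrand is positive at `a` or at `b`.
  have hpos : ∃ c ∈ Set.Icc a b, (0 : ℝ) < ‖e - c • w‖ := by
    by_contra! h
    have ha : e = a • w := sub_eq_zero.mp (norm_le_zero_iff.mp (h a ⟨le_rfl, hab.le⟩))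
    have hb : e = b • w := sub_eq_zero.mp (norm_le_zero_iff.mp (h b ⟨hab.le, le_rfl⟩))
    exact hab.ne (smul_left_injective ℝ hw (ha.symm.trans hb))
  simpa using intervalIntegral.integral_lt_integral_of_continuousOn_of_le_of_exists_lt
    (f := fun _ => 0) hab continuousOn_const hcont.continuousOn (fun s _ => norm_nonneg _) hpos

end IntegralNormSubSmul

theorem Filter.Tendsto.eventually_quadratic_le {α : Type*} {l : Filter α} {τ : α → ℝ}
    (hτ : Tendsto τ l (𝓝 0)) (a b : ℝ) {ε : ℝ} (hε : 0 < ε) :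
    ∀ᶠ d in l, a * τ d ^ 2 / 2 + b * τ d ≤ ε := by
  have : Tendsto (fun d => a * τ d ^ 2 / 2 + b * τ d) l (𝓝 0) := by
    simpa using (((hτ.pow 2).const_mul a).div_const 2).add (hτ.const_mul b)
  exact this.eventually (ge_mem_nhds hε)

section Frot

variable (ω : ℝ) (y : EuclideanSpace ℝ (Fin 3))

@[simp] theorem Frot_apply_zero : Frot ω y 0 = -ω * y 1 := rfl

@[simp] theorem Frot_apply_one : Frot ω y 1 = ω * y 0 := rfl

@[simp] theorem Frot_apply_two : Frot ω y 2 = 0 := rfl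

theorem Frot_add_smul (x v : EuclideanSpace ℝ (Fin 3)) (s : ℝ) :
    Frot ω (x + s • v) = Frot ω x + s • Frot ω v := by
  ext i
  fin_cases i <;> simp [mul_add, mul_left_comm]

theorem norm_Frot : ‖Frot ω y‖ = |ω| * dr y := by
  rw [EuclideanSpace.norm_eq, dr, ← Real.sqrt_sq_eq_abs, ← Real.sqrt_mul (sq_nonneg _)]
  simp only [Fin.sum_univ_three, Real.norm_eq_abs, sq_abs, Frot_apply_zero, Frot_apply_one,
    Frot_apply_two]
  ring_nf

theorem dr_Frot : dr (Frot ω y) = |ω| * dr y := by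
  rw [dr, dr, ← Real.sqrt_sq_eq_abs, ← Real.sqrt_mul (sq_nonneg _), Frot_apply_zero,
    Frot_apply_one]
  ring_nf

theorem dr_le_norm : dr y ≤ ‖y‖ := by
  rw [EuclideanSpace.norm_eq, dr, Fin.sum_univ_three]
  refine Real.sqrt_le_sqrt ?_
  simp only [Real.norm_eq_abs, sq_abs]
  linarith [sq_nonneg (y 2)]

end Frot

theorem abs_norm_Frot_Frot_add_sub_le (ω : ℝ) (x e : EuclideanSpace ℝ (Fin 3)) :
    |‖Frot ω (Frot ω x + e)‖ - ω ^ 2 * dr x| ≤ |ω| * ‖e‖ := by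
  have hsplit : Frot ω (Frot ω x + e) = Frot ω (Frot ω x) + Frot ω e := by
    simpa using Frot_add_smul ω (Frot ω x) e 1
  have hFF : ‖Frot ω (Frot ω x)‖ = ω ^ 2 * dr x := by
    rw [norm_Frot, dr_Frot, ← mul_assoc, ← sq, sq_abs]
  calc |‖Frot ω (Frot ω x + e)‖ - ω ^ 2 * dr x|
      ≤ ‖Frot ω e‖ := by
        rw [hsplit, ← hFF]
        simpa using abs_norm_sub_norm_le (Frot ω (Frot ω x) + Frot ω e) (Frot ω (Frot ω x))
    _ ≤ |ω| * ‖e‖ := by rw [norm_Frot]; gcongr; exact dr_le_norm e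

theorem Dtrav_Frot_add (ω : ℝ) (x e : EuclideanSpace ℝ (Fin 3)) (t : ℝ) :
    Dtrav ω x (Frot ω x + e) t = ∫ s in (0 : ℝ)..t, ‖e - s • Frot ω (Frot ω x + e)‖ := by
  simp only [Dtrav, Frot_add_smul, add_sub_add_left_eq_sub]

section Traveled

variable {ω M : ℝ} {x e : EuclideanSpace ℝ (Fin 3)}

theorem Dtrav_Frot_add_le (he : ‖e‖ ≤ M) {t : ℝ} (ht : 0 ≤ t) :
    Dtrav ω x (Frot ω x + e) t ≤ (ω ^ 2 * dr x + |ω| * M) * t ^ 2 / 2 + M * t := by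
  have hw := (abs_le.mp (abs_norm_Frot_Frot_add_sub_le ω x e)).2
  rw [Dtrav_Frot_add]
  refine (integral_norm_sub_smul_le _ _ ht).trans ?_
  gcongr
  linarith [mul_le_mul_of_nonneg_left he (abs_nonneg ω)]

theorem le_Dtrav_Frot_add (he : ‖e‖ ≤ M) {t : ℝ} (ht : 0 ≤ t) :
    (ω ^ 2 * dr x - |ω| * M) * t ^ 2 / 2 - M * t ≤ Dtrav ω x (Frot ω x + e) t := by
  have hw := (abs_le.mp (abs_norm_Frot_Frot_add_sub_le ω x e)).1
  rw [Dtrav_Frot_add]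
  refine le_trans ?_ (le_integral_norm_sub_smul _ _ ht)
  gcongr
  linarith [mul_le_mul_of_nonneg_left he (abs_nonneg ω)]

theorem strictMono_Dtrav_Frot_add (he : |ω| * ‖e‖ < ω ^ 2 * dr x) :
    StrictMono (Dtrav ω x (Frot ω x + e)) := by
  have hw : Frot ω (Frot ω x + e) ≠ 0 := by
    rw [← norm_pos_iff]
    linarith [(abs_le.mp (abs_norm_Frot_Frot_add_sub_le ω x e)).1]
  simpa only [funext (Dtrav_Frot_add ω x e)] using strictMono_integral_norm_sub_smul e hw

end Traveled

theorem stmt_9_general (ω M ξ : ℝ) (hω : 0 < ω) (hξ : 0 < ξ) :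
    ∃ N₀ : ℝ, 0 < N₀ ∧
      ∀ x e : EuclideanSpace ℝ (Fin 3), ‖e‖ ≤ M → dr x > N₀ →
        Dtrav ω x (Frot ω x + e) (Real.sqrt (ξ / (ω ^ 2 * dr x))) ≤ ξ ∧
        Dtrav ω x (Frot ω x + e) (2 * max 2 ξ / (ω * Real.sqrt (dr x))) ≥ ξ ∧
        ∀ t : ℝ, 0 ≤ t → Dtrav ω x (Frot ω x + e) t = ξ →
          (∀ s : ℝ, 0 ≤ s → s < t → Dtrav ω x (Frot ω x + e) s < ξ) →
          Real.sqrt (ξ / (ω ^ 2 * dr x)) ≤ t ∧ t ≤ 2 * max 2 ξ / (ω * Real.sqrt (dr x)) := by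
  set m := max 2 ξ
  have ht₁ : Tendsto (fun d => √(ξ / (ω ^ 2 * d))) atTop (𝓝 0) := by
    simpa using (tendsto_const_nhds.div_atTop (tendsto_id.const_mul_atTop (by positivity))).sqrt
  have ht₂ : Tendsto (fun d => 2 * m / (ω * √d)) atTop (𝓝 0) :=
    tendsto_const_nhds.div_atTop (Real.tendsto_sqrt_atTop.const_mul_atTop hω)
  obtain ⟨N, hN⟩ := eventually_atTop.mp <| (eventually_gt_atTop (M / ω)).and <|
    (ht₁.eventually_quadratic_le (ω * M) M (half_pos hξ)).and
      (ht₂.eventually_quadratic_le (ω * M) M hξ)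
  refine ⟨max N 1, by positivity, fun x e he hd => ?_⟩
  obtain ⟨hMd, h₁, h₂⟩ := hN (dr x) ((le_max_left N 1).trans hd.le)
  have hd0 : 0 < dr x := one_pos.trans_le (le_max_right N 1) |>.trans hd
  have hmono : StrictMono (Dtrav ω x (Frot ω x + e)) := strictMono_Dtrav_Frot_add <| by
    rw [abs_of_pos hω]; nlinarith [(div_lt_iff₀ hω).mp hMd]
  have hupper : Dtrav ω x (Frot ω x + e) √(ξ / (ω ^ 2 * dr x)) ≤ ξ := by
    have hsq : ω ^ 2 * dr x * √(ξ / (ω ^ 2 * dr x)) ^ 2 = ξ := by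
      rw [Real.sq_sqrt (by positivity)]; field_simp
    have := Dtrav_Frot_add_le (ω := ω) (x := x) he (Real.sqrt_nonneg (ξ / (ω ^ 2 * dr x)))
    rw [abs_of_pos hω] at this
    linarith
  have hlower : ξ ≤ Dtrav ω x (Frot ω x + e) (2 * m / (ω * √(dr x))) := by
    have hsq : ω ^ 2 * dr x * (2 * m / (ω * √(dr x))) ^ 2 = 4 * m ^ 2 := by
      rw [div_pow, mul_pow ω, Real.sq_sqrt hd0.le]; field_simp; ring
    have := le_Dtrav_Frot_add (ω := ω) (x := x) he (t := 2 * m / (ω * √(dr x))) (by positivity)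
    rw [abs_of_pos hω] at this
    nlinarith [le_max_left 2 ξ, le_max_right 2 ξ]
  exact ⟨hupper, hlower, fun t _ ht _ =>
    ⟨hmono.le_iff_le.mp (hupper.trans ht.ge), hmono.le_iff_le.mp (ht.le.trans hlower)⟩⟩

theorem stmt_9 (ω M ξ : ℝ) (hω : 0 < ω) (hM : 0 ≤ M) (hξ : 0 < ξ) :
    ∃ N₀ : ℝ, 0 < N₀ ∧
      ∀ x e : EuclideanSpace ℝ (Fin 3), ‖e‖ ≤ M → dr x > N₀ →
        Dtrav ω x (Frot ω x + e) (Real.sqrt (ξ / (ω ^ 2 * dr x))) ≤ ξ ∧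
        Dtrav ω x (Frot ω x + e) (2 * max 2 ξ / (ω * Real.sqrt (dr x))) ≥ ξ ∧
        ∀ t : ℝ, 0 ≤ t → Dtrav ω x (Frot ω x + e) t = ξ →
          (∀ s : ℝ, 0 ≤ s → s < t → Dtrav ω x (Frot ω x + e) s < ξ) →
          Real.sqrt (ξ / (ω ^ 2 * dr x)) ≤ t ∧ t ≤ 2 * max 2 ξ / (ω * Real.sqrt (dr x)) :=
  stmt_9_general ω M ξ hω hξ
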